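/- arXiv:1210.2621 — 5 statements merged into one kernel-verified Lean document; each statement's English description precedes it below -/
import Mathlib

section
/- For all integers k, ℓ with 5 ≤ k ≤ ℓ and every integer n ≥ ℓ(k−1), there exists a (k,ℓ)-crucial permutation of length n. -/
/-- `π` (viewed as a 1-indexed function `ℕ → ℕ`) is a permutation of length `n`,
i.e. the values `π 1, π 2, …, π n` contain each of `1,…,n` exactly once. -/
def IsPermutation (n : ℕ) (π : ℕ → ℕ) : Prop :=
  (∀ i, 1 ≤ i → i ≤ n → 1 ≤ π i ∧ π i ≤ n) ∧
  (∀ i j, 1 ≤ i → i ≤ n → 1 ≤ j → j ≤ n → π i = π j → i = j) ∧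
  (∀ v, 1 ≤ v → v ≤ n → ∃ i, 1 ≤ i ∧ i ≤ n ∧ π i = v)

/-- `π` (of length `n`) has a strictly increasing arithmetic subsequence of length `k`,
i.e. an arithmetic occurrence of the pattern `1 2 … k`. -/
def HasArithInc (n k : ℕ) (π : ℕ → ℕ) : Prop :=
  ∃ i d : ℕ, 1 ≤ i ∧ 1 ≤ d ∧ i + (k - 1) * d ≤ n ∧
    ∀ j, j + 1 < k → π (i + j * d) < π (i + (j + 1) * d)

/-- `π` (of length `n`) has a strictly decreasing arithmetic subsequence of length `k`,
i.e. an arithmetic occurrence of the pattern `k (k-1) … 1`. -/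
def HasArithDec (n k : ℕ) (π : ℕ → ℕ) : Prop :=
  ∃ i d : ℕ, 1 ≤ i ∧ 1 ≤ d ∧ i + (k - 1) * d ≤ n ∧
    ∀ j, j + 1 < k → π (i + j * d) > π (i + (j + 1) * d)

/-- `π` (of length `n`) is `(k,l)`-anti-monotone: it avoids arithmetically
the patterns `1 2 … k` and `l (l-1) … 1`. -/
def AntiMonotone (n k l : ℕ) (π : ℕ → ℕ) : Prop :=
  ¬ HasArithInc n k π ∧ ¬ HasArithDec n l π

/-- The extension of `π` (of length `n`) to the right by `x`: every entry `≥ x` is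
increased by `1` and `x` is appended at the right end (position `n+1`). -/
def ExtendRight (n : ℕ) (π : ℕ → ℕ) (x : ℕ) : ℕ → ℕ :=
  fun i => if i = n + 1 then x else if x ≤ π i then π i + 1 else π i

/-- The extension of `π` to the left by `x`: every entry `≥ x` is increased by `1`
and `x` is prepended at the left end (position `1`). -/
def ExtendLeft (π : ℕ → ℕ) (x : ℕ) : ℕ → ℕ :=
  fun i => if i = 1 then x else if x ≤ π (i - 1) then π (i - 1) + 1 else π (i - 1)

/-- `π` is a `(k,l)`-crucial permutation of length `n`. -/
def Crucial (n k l : ℕ) (π : ℕ → ℕ) : Prop :=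
  IsPermutation n π ∧ AntiMonotone n k l π ∧
  ∀ x, 1 ≤ x → x ≤ n + 1 → ¬ AntiMonotone (n + 1) k l (ExtendRight n π x)

/-- `π` is a `(k,l)`-bicrucial permutation of length `n`. -/
def Bicrucial (n k l : ℕ) (π : ℕ → ℕ) : Prop :=
  Crucial n k l π ∧
  ∀ x, 1 ≤ x → x ≤ n + 1 → ¬ AntiMonotone (n + 1) k l (ExtendLeft π x)

/-!
Read the permutation from its right end: its `i`-th entry from the right is the rank of `g i`
among `g 1, …, g n` for one fixed sequence `g = crucialSeq k ℓ`. The positions `1, …, ℓ - 1`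
carry an increasing run at the top of the order, the multiples `ℓ, 2ℓ, …` a decreasing chain
at the bottom, and every other position `j` the value `1 + radicalInverse (k - 3) j` in between.

Along an arithmetic progression of difference `M ^ e * c` with `M ∤ c`, the radical inverse in
base `M` is ordered by the `e`-th digit, which moves by `c` modulo `M` at each step, so it is
monotone on at most `M` consecutive terms. Two consecutive chain terms of a progression force
all its terms into the chain, and the run increases, lies left of every other position and
above it in value. Hence a monotone progression of `g` either stays in the chain, where
it has at most `k - 1` terms, or has at most one term in the chain, at most one in the run and
at most `k - 3` in between: it is shorter than `k ≤ ℓ`.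

Appending an entry not above the last one prolongs the run, seen from the right, to a decreasing
progression of length `ℓ` and difference `1`; appending a larger entry prolongs the first
`k - 1` terms of the chain to an increasing progression of length `k` and difference `ℓ`, which
fits exactly when `n ≥ ℓ (k - 1)`.
-/

open Finset

section ArithmeticProgression

variable {α : Type*}

def StrictMonoOnAP [LT α] (f : ℕ → α) (x d L : ℕ) : Prop :=
  ∀ t, t + 1 < L → f (x + t * d) < f (x + (t + 1) * d)

def StrictAntiOnAP [LT α] (f : ℕ → α) (x d L : ℕ) : Prop :=
  ∀ t, t + 1 < L → f (x + (t + 1) * d) < f (x + t * d)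

variable [Preorder α] {f : ℕ → α} {x d L : ℕ}

theorem StrictMonoOnAP.strictMonoOn (h : StrictMonoOnAP f x d L) :
    StrictMonoOn (fun t => f (x + t * d)) (Set.Iio L) :=
  strictMonoOn_of_lt_succ Set.ordConnected_Iio fun t _ _ ht => by
    simpa [Order.succ_eq_add_one] using h t ht

theorem StrictAntiOnAP.strictAntiOn (h : StrictAntiOnAP f x d L) :
    StrictAntiOn (fun t => f (x + t * d)) (Set.Iio L) :=
  strictAntiOn_of_succ_lt Set.ordConnected_Iio fun t _ _ ht => by
    simpa [Order.succ_eq_add_one] using h t ht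

theorem strictMonoOnAP_comp_reflect_iff {n q : ℕ} (hq : x + (L - 1) * d + q = n + 1) :
    StrictMonoOnAP (fun i => f (n + 1 - i)) x d L ↔ StrictAntiOnAP f q d L := by
  have hpos : ∀ t, t < L → n + 1 - (x + (L - 1 - t) * d) = q + t * d := by
    intro t ht
    have : (L - 1 - t) * d + t * d = (L - 1) * d := by
      rw [← add_mul, Nat.sub_add_cancel (by omega)]
    omega
  constructor
  · intro h s hs
    have := h (L - 2 - s) (by omega)
    dsimp only at this
    rwa [show L - 2 - s = L - 1 - (s + 1) by omega, show L - 1 - (s + 1) + 1 = L - 1 - s by omega,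
      hpos _ hs, hpos _ (by omega)] at this
  · intro h t ht
    have := h (L - 2 - t) (by omega)
    dsimp only
    rwa [← hpos _ (by omega), ← hpos _ (by omega), show L - 1 - (L - 2 - t + 1) = t by omega,
      show L - 1 - (L - 2 - t) = t + 1 by omega] at this

theorem strictAntiOnAP_comp_reflect_iff {n q : ℕ} (hq : x + (L - 1) * d + q = n + 1) :
    StrictAntiOnAP (fun i => f (n + 1 - i)) x d L ↔ StrictMonoOnAP f q d L :=
  strictMonoOnAP_comp_reflect_iff (α := αᵒᵈ) hq

end ArithmeticProgression

theorem length_le_of_injOn {f : ℕ → ℕ} {L M : ℕ} (hf : Set.InjOn f (Set.Iio L))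
    (hM : ∀ t, f t < M) : L ≤ M := by
  simpa using card_le_card_of_injOn f (s := range L) (t := range M)
    (fun t _ => mem_range.2 (hM t)) (by simpa using hf)

theorem dvd_of_dvd_consecutive {ℓ q d s : ℕ} (h₁ : ℓ ∣ q + s * d)
    (h₂ : ℓ ∣ q + (s + 1) * d) : ℓ ∣ q ∧ ℓ ∣ d := by
  have hd : ℓ ∣ d := (Nat.dvd_add_right h₁).1 (by rwa [add_one_mul, ← add_assoc] at h₂)
  exact ⟨(Nat.dvd_add_left (Dvd.dvd.mul_left hd s)).1 h₁, hd⟩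

theorem mod_ne_mod_add {M d : ℕ} (hd : ¬ M ∣ d) (a : ℕ) : a % M ≠ (a + d) % M := fun h =>
  hd (Nat.dvd_of_mod_eq_zero (by simpa using Nat.sub_mod_eq_zero_of_mod_eq h.symm))

section RadicalInverse

def radicalInverse (M x : ℕ) : ℚ :=
  (M : ℚ)⁻¹ * Nat.ofDigits (M : ℚ)⁻¹ (Nat.digits M x)

variable {M : ℕ}

@[simp]
theorem radicalInverse_zero : radicalInverse M 0 = 0 := by
  simp [radicalInverse, Nat.ofDigits]

theorem radicalInverse_nonneg (M x : ℕ) : 0 ≤ radicalInverse M x := by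
  have : ∀ L : List ℕ, 0 ≤ Nat.ofDigits (M : ℚ)⁻¹ L := by
    intro L
    induction L with
    | nil => simp [Nat.ofDigits]
    | cons a L ih => rw [Nat.ofDigits]; positivity
  exact mul_nonneg (by positivity) (this _)

variable (hM : 2 ≤ M)
include hM

theorem radicalInverse_eq_mod_add_div (x : ℕ) :
    radicalInverse M x = ((x % M : ℕ) + radicalInverse M (x / M)) / M := by
  rcases Nat.eq_zero_or_pos x with rfl | hx
  · simp
  rw [radicalInverse, Nat.digits_def' (by omega) hx, Nat.ofDigits, radicalInverse]
  ring

theorem radicalInverse_lt_one (x : ℕ) : radicalInverse M x < 1 := by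
  induction x using Nat.strong_induction_on with
  | _ x ih =>
  rcases Nat.eq_zero_or_pos x with rfl | hx
  · simp
  have hdigit : ((x % M : ℕ) : ℚ) + 1 ≤ M := by exact_mod_cast Nat.mod_lt x (by omega)
  rw [radicalInverse_eq_mod_add_div hM, div_lt_one (by positivity)]
  linarith [ih (x / M) (Nat.div_lt_self hx (by omega))]

theorem radicalInverse_lt_of_mod_lt {a b : ℕ} (h : a % M < b % M) :
    radicalInverse M a < radicalInverse M b := by
  have hdigit : ((a % M : ℕ) : ℚ) + 1 ≤ (b % M : ℕ) := by exact_mod_cast h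
  rw [radicalInverse_eq_mod_add_div hM a, radicalInverse_eq_mod_add_div hM b]
  gcongr ?_ / _
  linarith [radicalInverse_lt_one hM (a / M), radicalInverse_nonneg M (b / M)]

theorem radicalInverse_lt_iff_of_mod_eq {a b : ℕ} (h : a % M = b % M) :
    radicalInverse M a < radicalInverse M b ↔
      radicalInverse M (a / M) < radicalInverse M (b / M) := by
  rw [radicalInverse_eq_mod_add_div hM a, radicalInverse_eq_mod_add_div hM b, h,
    div_lt_div_iff_of_pos_right (by positivity), add_lt_add_iff_left]

theorem mod_lt_mod_of_radicalInverse_lt {a b : ℕ} (hab : a % M ≠ b % M)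
    (h : radicalInverse M a < radicalInverse M b) : a % M < b % M :=
  hab.lt_or_gt.resolve_right fun h' => (radicalInverse_lt_of_mod_lt hM h').not_gt h

theorem radicalInverse_strictMonoOn : StrictMonoOn (radicalInverse M) (Set.Iio M) :=
  fun a ha b hb hab => radicalInverse_lt_of_mod_lt hM <| by
    rwa [Nat.mod_eq_of_lt ha, Nat.mod_eq_of_lt hb]

theorem radicalInverse_injective : Function.Injective (radicalInverse M) := by
  intro a b hab
  induction hs : a + b using Nat.strong_induction_on generalizing a b with
  | _ s ih =>
  rcases Nat.eq_zero_or_pos s with rfl | hs0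
  · omega
  have hmod : a % M = b % M := by
    by_contra hne
    rcases Nat.lt_or_gt_of_ne hne with h | h
    · exact (radicalInverse_lt_of_mod_lt hM h).ne hab
    · exact (radicalInverse_lt_of_mod_lt hM h).ne' hab
  rw [radicalInverse_eq_mod_add_div hM a, radicalInverse_eq_mod_add_div hM b, hmod] at hab
  have hdiv : a / M = b / M := by
    refine ih _ ?_ ((add_right_inj _).1 ((div_left_inj' (by positivity)).1 hab)) rfl
    exact Nat.div_add_div_le_add_div.trans_lt (by rw [hs]; exact Nat.div_lt_self hs0 (by omega))
  rw [← Nat.div_add_mod a M, ← Nat.div_add_mod b M, hdiv, hmod]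

theorem strictMonoOnAP_radicalInverse_mul_iff {x d L : ℕ} :
    StrictMonoOnAP (radicalInverse M) x (M * d) L ↔
      StrictMonoOnAP (radicalInverse M) (x / M) d L := by
  have hterm : ∀ t, x + t * (M * d) = x + M * (t * d) := fun t => by ring
  refine forall₂_congr fun t _ => ?_
  rw [hterm, hterm, radicalInverse_lt_iff_of_mod_eq hM (by simp [Nat.add_mul_mod_self_left]),
    Nat.add_mul_div_left _ _ (by omega), Nat.add_mul_div_left _ _ (by omega)]

theorem strictAntiOnAP_radicalInverse_mul_iff {x d L : ℕ} :
    StrictAntiOnAP (radicalInverse M) x (M * d) L ↔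
      StrictAntiOnAP (radicalInverse M) (x / M) d L := by
  have hterm : ∀ t, x + t * (M * d) = x + M * (t * d) := fun t => by ring
  refine forall₂_congr fun t _ => ?_
  rw [hterm, hterm, radicalInverse_lt_iff_of_mod_eq hM (by simp [Nat.add_mul_mod_self_left]),
    Nat.add_mul_div_left _ _ (by omega), Nat.add_mul_div_left _ _ (by omega)]

theorem length_le_of_strictMonoOnAP_radicalInverse {x d L : ℕ} (hd : d ≠ 0)
    (h : StrictMonoOnAP (radicalInverse M) x d L) : L ≤ M := by
  induction d using Nat.strong_induction_on generalizing x with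
  | _ d ih =>
  by_cases hMd : M ∣ d
  · obtain ⟨d', rfl⟩ := hMd
    have hd' : 0 < d' := Nat.pos_of_ne_zero (by rintro rfl; simp at hd)
    exact ih d' (by nlinarith) hd'.ne' ((strictMonoOnAP_radicalInverse_mul_iff hM).1 h)
  · have hdigits : StrictMonoOnAP (· % M) x d L := fun t ht =>
      mod_lt_mod_of_radicalInverse_lt hM
        (by rw [add_one_mul, ← add_assoc]; exact mod_ne_mod_add hMd _) (h t ht)
    exact length_le_of_injOn hdigits.strictMonoOn.injOn fun t => Nat.mod_lt _ (by omega)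

theorem length_le_of_strictAntiOnAP_radicalInverse {x d L : ℕ} (hd : d ≠ 0)
    (h : StrictAntiOnAP (radicalInverse M) x d L) : L ≤ M := by
  induction d using Nat.strong_induction_on generalizing x with
  | _ d ih =>
  by_cases hMd : M ∣ d
  · obtain ⟨d', rfl⟩ := hMd
    have hd' : 0 < d' := Nat.pos_of_ne_zero (by rintro rfl; simp at hd)
    exact ih d' (by nlinarith) hd'.ne' ((strictAntiOnAP_radicalInverse_mul_iff hM).1 h)
  · have hdigits : StrictAntiOnAP (· % M) x d L := fun t ht =>
      mod_lt_mod_of_radicalInverse_lt hM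
        (by rw [add_one_mul, ← add_assoc]; exact (mod_ne_mod_add hMd _).symm) (h t ht)
    exact length_le_of_injOn hdigits.strictAntiOn.injOn fun t => Nat.mod_lt _ (by omega)

end RadicalInverse

section Rank

variable {α : Type*} [LinearOrder α] {n : ℕ} {f : ℕ → α}

def rankOn (n : ℕ) (f : ℕ → α) (i : ℕ) : ℕ := #{j ∈ Icc 1 n | f j ≤ f i}

theorem rankOn_le_rankOn {i j : ℕ} (h : f i ≤ f j) : rankOn n f i ≤ rankOn n f j :=
  card_le_card fun a ha => by
    simp only [mem_filter] at ha ⊢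
    exact ⟨ha.1, ha.2.trans h⟩

theorem rankOn_lt_rankOn_iff {i j : ℕ} (hj : j ∈ Icc 1 n) :
    rankOn n f i < rankOn n f j ↔ f i < f j := by
  refine ⟨fun h => lt_of_not_ge fun h' => (rankOn_le_rankOn h').not_gt h, fun h => ?_⟩
  refine card_lt_card ⟨fun a ha => ?_, fun hsub => ?_⟩
  · simp only [mem_filter] at ha ⊢
    exact ⟨ha.1, ha.2.trans h.le⟩
  · exact (mem_filter.1 (hsub (mem_filter.2 ⟨hj, le_rfl⟩))).2.not_gt h

theorem strictMonoOnAP_rankOn_iff {x d L : ℕ} (hx : 1 ≤ x) (hL : x + (L - 1) * d ≤ n) :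
    StrictMonoOnAP (rankOn n f) x d L ↔ StrictMonoOnAP f x d L :=
  forall₂_congr fun t ht => rankOn_lt_rankOn_iff <| mem_Icc.2
    ⟨by omega, by nlinarith [Nat.mul_le_mul_right d (show t + 1 ≤ L - 1 by omega)]⟩

theorem strictAntiOnAP_rankOn_iff {x d L : ℕ} (hx : 1 ≤ x) (hL : x + (L - 1) * d ≤ n) :
    StrictAntiOnAP (rankOn n f) x d L ↔ StrictAntiOnAP f x d L :=
  forall₂_congr fun t ht => rankOn_lt_rankOn_iff <| mem_Icc.2
    ⟨by omega, by nlinarith [Nat.mul_le_mul_right d (show t ≤ L - 1 by omega)]⟩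

theorem isPermutation_rankOn (hf : Set.InjOn f (Set.Icc 1 n)) :
    IsPermutation n (rankOn n f) := by
  have hmaps : ∀ i ∈ Icc 1 n, rankOn n f i ∈ Icc 1 n := fun i hi => mem_Icc.2
    ⟨card_pos.2 ⟨i, mem_filter.2 ⟨hi, le_rfl⟩⟩, (card_filter_le _ _).trans (by simp)⟩
  have hinj : ∀ i ∈ Icc 1 n, ∀ j ∈ Icc 1 n, rankOn n f i = rankOn n f j → i = j := by
    intro i hi j hj hij
    rcases lt_trichotomy (f i) (f j) with h | h | h
    · exact absurd hij ((rankOn_lt_rankOn_iff hj).2 h).ne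
    · exact hf (by simpa using hi) (by simpa using hj) h
    · exact absurd hij ((rankOn_lt_rankOn_iff hi).2 h).ne'
  refine ⟨fun i h₁ h₂ => mem_Icc.1 (hmaps i (mem_Icc.2 ⟨h₁, h₂⟩)),
    fun i j hi₁ hi₂ hj₁ hj₂ => hinj i (mem_Icc.2 ⟨hi₁, hi₂⟩) j (mem_Icc.2 ⟨hj₁, hj₂⟩),
    fun v hv₁ hv₂ => ?_⟩
  obtain ⟨i, hi, hv⟩ := surj_on_of_inj_on_of_card_le (fun i _ => rankOn n f i) hmaps
    (fun i j hi hj => hinj i hi j hj) le_rfl v (mem_Icc.2 ⟨hv₁, hv₂⟩)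
  exact ⟨i, (mem_Icc.1 hi).1, (mem_Icc.1 hi).2, hv.symm⟩

end Rank

section ExtendRight

variable {n x : ℕ} {π : ℕ → ℕ}

theorem extendRight_last : ExtendRight n π x (n + 1) = x := if_pos rfl

theorem extendRight_lt_extendRight_iff {i j : ℕ} (hi : i ≤ n) (hj : j ≤ n) :
    ExtendRight n π x i < ExtendRight n π x j ↔ π i < π j := by
  simp only [ExtendRight, if_neg (show i ≠ n + 1 by omega), if_neg (show j ≠ n + 1 by omega)]
  split_ifs <;> omega

theorem extendRight_lt_iff {i : ℕ} (hi : i ≤ n) : ExtendRight n π x i < x ↔ π i < x := by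
  simp only [ExtendRight, if_neg (show i ≠ n + 1 by omega)]
  split_ifs <;> omega

theorem lt_extendRight_iff {i : ℕ} (hi : i ≤ n) : x < ExtendRight n π x i ↔ x ≤ π i := by
  simp only [ExtendRight, if_neg (show i ≠ n + 1 by omega)]
  split_ifs <;> omega

variable {a d L : ℕ}

theorem add_mul_le_of_add_mul_eq {t : ℕ} (hend : a + L * d = n + 1) (hd : 1 ≤ d) (ht : t < L) :
    a + t * d ≤ n := by
  nlinarith [Nat.mul_le_mul_right d (show t + 1 ≤ L by omega)]

theorem hasArithInc_extendRight (ha : 1 ≤ a) (hd : 1 ≤ d) (hend : a + L * d = n + 1)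
    (h : StrictMonoOnAP π a d L) (hx : π (n + 1 - d) < x) :
    HasArithInc (n + 1) (L + 1) (ExtendRight n π x) := by
  refine ⟨a, d, ha, hd, by simpa using hend.le, fun t ht => ?_⟩
  have hle : a + t * d ≤ n := add_mul_le_of_add_mul_eq hend hd (by omega)
  rcases (show t + 1 < L ∨ t + 1 = L by omega) with ht' | rfl
  · exact (extendRight_lt_extendRight_iff hle (add_mul_le_of_add_mul_eq hend hd ht')).2
      (h t ht')
  · rw [hend, extendRight_last, extendRight_lt_iff hle]
    rwa [show a + t * d = n + 1 - d by rw [add_one_mul] at hend; omega]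

theorem hasArithDec_extendRight (ha : 1 ≤ a) (hd : 1 ≤ d) (hend : a + L * d = n + 1)
    (h : StrictAntiOnAP π a d L) (hx : x ≤ π (n + 1 - d)) :
    HasArithDec (n + 1) (L + 1) (ExtendRight n π x) := by
  refine ⟨a, d, ha, hd, by simpa using hend.le, fun t ht => ?_⟩
  have hle : a + t * d ≤ n := add_mul_le_of_add_mul_eq hend hd (by omega)
  rcases (show t + 1 < L ∨ t + 1 = L by omega) with ht' | rfl
  · exact (extendRight_lt_extendRight_iff (add_mul_le_of_add_mul_eq hend hd ht') hle).2
      (h t ht')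
  · rw [hend, extendRight_last, gt_iff_lt, lt_extendRight_iff hle]
    rwa [show a + t * d = n + 1 - d by rw [add_one_mul] at hend; omega]

end ExtendRight

section CrucialSeq

def crucialSeq (k ℓ j : ℕ) : ℚ :=
  if j < ℓ then 2 + j
  else if ℓ ∣ j then -radicalInverse (k - 1) (j / ℓ - 1)
  else 1 + radicalInverse (k - 3) j

variable {k ℓ j q d : ℕ}

theorem crucialSeq_of_lt (h : j < ℓ) : crucialSeq k ℓ j = 2 + j := if_pos h

theorem crucialSeq_of_dvd (h : ℓ ≤ j) (hdvd : ℓ ∣ j) :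
    crucialSeq k ℓ j = -radicalInverse (k - 1) (j / ℓ - 1) := by
  rw [crucialSeq, if_neg (by omega), if_pos hdvd]

theorem crucialSeq_of_not_dvd (h : ℓ ≤ j) (hdvd : ¬ ℓ ∣ j) :
    crucialSeq k ℓ j = 1 + radicalInverse (k - 3) j := by
  rw [crucialSeq, if_neg (by omega), if_neg hdvd]

theorem crucialSeq_strictMonoOn_Iio : StrictMonoOn (crucialSeq k ℓ) (Set.Iio ℓ) :=
  fun i hi j hj hij => by
    rw [crucialSeq_of_lt hi, crucialSeq_of_lt hj]
    exact_mod_cast Nat.add_lt_add_left hij 2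

theorem crucialSeq_nonpos_iff (hj : 1 ≤ j) : crucialSeq k ℓ j ≤ 0 ↔ ℓ ∣ j := by
  rcases lt_or_ge j ℓ with hjℓ | hjℓ
  · rw [crucialSeq_of_lt hjℓ]
    simp only [Nat.not_dvd_of_pos_of_lt hj hjℓ, iff_false, not_le]
    positivity
  by_cases hdvd : ℓ ∣ j
  · simp [crucialSeq_of_dvd hjℓ hdvd, hdvd, radicalInverse_nonneg]
  · simp only [crucialSeq_of_not_dvd hjℓ hdvd, hdvd, iff_false, not_le]
    linarith [radicalInverse_nonneg (k - 3) j]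

theorem two_le_crucialSeq_iff (hk : 5 ≤ k) : 2 ≤ crucialSeq k ℓ j ↔ j < ℓ := by
  rcases lt_or_ge j ℓ with hjℓ | hjℓ
  · simp [crucialSeq_of_lt hjℓ, hjℓ]
  simp only [not_lt.2 hjℓ, iff_false, not_le]
  by_cases hdvd : ℓ ∣ j
  · rw [crucialSeq_of_dvd hjℓ hdvd]
    linarith [radicalInverse_nonneg (k - 1) (j / ℓ - 1)]
  · rw [crucialSeq_of_not_dvd hjℓ hdvd]
    linarith [radicalInverse_lt_one (by omega : 2 ≤ k - 3) j]

theorem crucialSeq_lt_crucialSeq_iff_of_not_dvd {i : ℕ} (hi : ℓ ≤ i ∧ ¬ ℓ ∣ i)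
    (hj : ℓ ≤ j ∧ ¬ ℓ ∣ j) :
    crucialSeq k ℓ i < crucialSeq k ℓ j ↔
      radicalInverse (k - 3) i < radicalInverse (k - 3) j := by
  rw [crucialSeq_of_not_dvd hi.1 hi.2, crucialSeq_of_not_dvd hj.1 hj.2, add_lt_add_iff_left]

theorem crucialSeq_add_mul_of_dvd (hq : 1 ≤ q) (hℓq : ℓ ∣ q) (hℓd : ℓ ∣ d) (t : ℕ) :
    crucialSeq k ℓ (q + t * d) = -radicalInverse (k - 1) (q / ℓ - 1 + t * (d / ℓ)) := by
  obtain ⟨Q, rfl⟩ := hℓq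
  obtain ⟨D, rfl⟩ := hℓd
  have hℓ : 0 < ℓ := Nat.pos_of_ne_zero (by rintro rfl; simp at hq)
  have hQ : 1 ≤ Q := Nat.pos_of_ne_zero (by rintro rfl; simp at hq)
  rw [show ℓ * Q + t * (ℓ * D) = ℓ * (Q + t * D) by ring,
    crucialSeq_of_dvd (Nat.le_mul_of_pos_right _ (by omega)) (dvd_mul_right _ _),
    Nat.mul_div_cancel_left _ hℓ, Nat.mul_div_cancel_left _ hℓ, Nat.mul_div_cancel_left _ hℓ]
  congr 2
  omega

theorem strictAntiOnAP_crucialSeq_iff_of_dvd {L : ℕ} (hq : 1 ≤ q) (hℓq : ℓ ∣ q)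
    (hℓd : ℓ ∣ d) :
    StrictAntiOnAP (crucialSeq k ℓ) q d L ↔
      StrictMonoOnAP (radicalInverse (k - 1)) (q / ℓ - 1) (d / ℓ) L := by
  simp only [StrictAntiOnAP, StrictMonoOnAP, crucialSeq_add_mul_of_dvd hq hℓq hℓd,
    neg_lt_neg_iff]

theorem strictMonoOnAP_crucialSeq_iff_of_dvd {L : ℕ} (hq : 1 ≤ q) (hℓq : ℓ ∣ q)
    (hℓd : ℓ ∣ d) :
    StrictMonoOnAP (crucialSeq k ℓ) q d L ↔
      StrictAntiOnAP (radicalInverse (k - 1)) (q / ℓ - 1) (d / ℓ) L := by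
  simp only [StrictAntiOnAP, StrictMonoOnAP, crucialSeq_add_mul_of_dvd hq hℓq hℓd,
    neg_lt_neg_iff]

theorem crucialSeq_injOn (hk : 5 ≤ k) : Set.InjOn (crucialSeq k ℓ) (Set.Ici 1) := by
  intro i hi j hj hij
  simp only [Set.mem_Ici] at hi hj
  have hrun : i < ℓ ↔ j < ℓ := by
    rw [← two_le_crucialSeq_iff hk, hij, two_le_crucialSeq_iff hk]
  have hguard : ℓ ∣ i ↔ ℓ ∣ j := by
    rw [← crucialSeq_nonpos_iff hi, hij, crucialSeq_nonpos_iff hj]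
  rcases lt_or_ge i ℓ with hiℓ | hiℓ
  · simpa [crucialSeq_of_lt hiℓ, crucialSeq_of_lt (hrun.1 hiℓ)] using hij
  have hjℓ : ℓ ≤ j := not_lt.1 (hrun.not.1 (not_lt.2 hiℓ))
  by_cases hdvd : ℓ ∣ i
  · have hℓ : 0 < ℓ := Nat.pos_of_dvd_of_pos hdvd hi
    rw [crucialSeq_of_dvd hiℓ hdvd, crucialSeq_of_dvd hjℓ (hguard.1 hdvd), neg_inj] at hij
    have hquot := radicalInverse_injective (by omega : 2 ≤ k - 1) hij
    have : 1 ≤ i / ℓ := (Nat.one_le_div_iff hℓ).2 hiℓ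
    have : 1 ≤ j / ℓ := (Nat.one_le_div_iff hℓ).2 hjℓ
    rw [← Nat.div_mul_cancel hdvd, ← Nat.div_mul_cancel (hguard.1 hdvd)]
    congr 1
    omega
  · rw [crucialSeq_of_not_dvd hiℓ hdvd, crucialSeq_of_not_dvd hjℓ (hguard.not.1 hdvd),
      add_right_inj] at hij
    exact radicalInverse_injective (by omega : 2 ≤ k - 3) hij

theorem not_strictAntiOnAP_crucialSeq (hk : 5 ≤ k) (hq : 1 ≤ q) (hd : 1 ≤ d) :
    ¬ StrictAntiOnAP (crucialSeq k ℓ) q d k := by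
  intro h
  have hguards : ¬ (ℓ ∣ q ∧ ℓ ∣ d) := fun ⟨hℓq, hℓd⟩ => by
    have hℓ : 0 < ℓ := Nat.pos_of_dvd_of_pos hℓq hq
    have hD : d / ℓ ≠ 0 := (Nat.div_pos (Nat.le_of_dvd hd hℓd) hℓ).ne'
    have := length_le_of_strictMonoOnAP_radicalInverse (by omega) hD
      ((strictAntiOnAP_crucialSeq_iff_of_dvd hq hℓq hℓd).1 h)
    omega
  have hbulk : ∀ s, 1 ≤ s → s ≤ k - 2 → ℓ ≤ q + s * d ∧ ¬ ℓ ∣ q + s * d := by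
    intro s hs₁ hs₂
    have hsd : 0 < s * d := Nat.mul_pos hs₁ hd
    constructor
    · by_contra hrun
      have hlt := h.strictAntiOn (a := 0) (b := s) (by omega : 0 < k) (by omega : s < k) hs₁
      simp only [zero_mul, add_zero] at hlt
      exact hlt.not_gt <| crucialSeq_strictMonoOn_Iio (by omega : q < ℓ)
        (by omega : q + s * d < ℓ) (by omega)
    · intro hdvd
      have hnext : ℓ ∣ q + (s + 1) * d := (crucialSeq_nonpos_iff (by omega)).1
        ((h s (by omega)).le.trans ((crucialSeq_nonpos_iff (by omega)).2 hdvd))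
      exact hguards (dvd_of_dvd_consecutive hdvd hnext)
  have hshift : ∀ t, q + (t + 1) * d = q + d + t * d := fun t => by ring
  have hchain : StrictAntiOnAP (radicalInverse (k - 3)) (q + d) d (k - 2) := fun t ht => by
    have := h (t + 1) (by omega)
    rwa [crucialSeq_lt_crucialSeq_iff_of_not_dvd (hbulk _ (by omega) (by omega))
      (hbulk _ (by omega) (by omega)), hshift (t + 1), hshift t] at this
  have := length_le_of_strictAntiOnAP_radicalInverse (by omega) (by omega) hchain
  omega

theorem not_strictMonoOnAP_crucialSeq (hk : 5 ≤ k) (hkℓ : k ≤ ℓ) (hq : 1 ≤ q)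
    (hd : 1 ≤ d) : ¬ StrictMonoOnAP (crucialSeq k ℓ) q d ℓ := by
  intro h
  have hguards : ¬ (ℓ ∣ q ∧ ℓ ∣ d) := fun ⟨hℓq, hℓd⟩ => by
    have hD : d / ℓ ≠ 0 := (Nat.div_pos (Nat.le_of_dvd hd hℓd) (by omega)).ne'
    have := length_le_of_strictAntiOnAP_radicalInverse (by omega) hD
      ((strictMonoOnAP_crucialSeq_iff_of_dvd hq hℓq hℓd).1 h)
    omega
  have hbulk : ∀ s, 1 ≤ s → s ≤ ℓ - 2 → ℓ ≤ q + s * d ∧ ¬ ℓ ∣ q + s * d := by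
    intro s hs₁ hs₂
    constructor
    · -- the last term is past the run, and run values lie above all others
      by_contra hrun
      have hlast : ¬ 2 ≤ crucialSeq k ℓ (q + (ℓ - 1) * d) := by
        rw [two_le_crucialSeq_iff hk, not_lt]
        have := Nat.le_mul_of_pos_right (ℓ - 1) hd
        omega
      have hlt := h.strictMonoOn (a := s) (b := ℓ - 1) (by omega : s < ℓ)
        (by omega : ℓ - 1 < ℓ) (by omega)
      exact hlast (((two_le_crucialSeq_iff hk).2 (not_le.1 hrun)).trans hlt.le)
    · intro hdvd
      have hs : s - 1 + 1 = s := Nat.sub_add_cancel hs₁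
      have hprev : ℓ ∣ q + (s - 1) * d := (crucialSeq_nonpos_iff (by omega)).1
        ((h (s - 1) (by omega)).le.trans ((crucialSeq_nonpos_iff (by omega)).2 (by rwa [hs])))
      exact hguards (dvd_of_dvd_consecutive hprev (by rwa [hs]))
  have hshift : ∀ t, q + (t + 1) * d = q + d + t * d := fun t => by ring
  have hchain : StrictMonoOnAP (radicalInverse (k - 3)) (q + d) d (ℓ - 2) := fun t ht => by
    have := h (t + 1) (by omega)
    rwa [crucialSeq_lt_crucialSeq_iff_of_not_dvd (hbulk _ (by omega) (by omega))
      (hbulk _ (by omega) (by omega)), hshift (t + 1), hshift t] at this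
  have := length_le_of_strictMonoOnAP_radicalInverse (by omega) (by omega) hchain
  omega

end CrucialSeq

section CrucialPerm

def crucialPerm (k ℓ n : ℕ) : ℕ → ℕ := rankOn n fun i => crucialSeq k ℓ (n + 1 - i)

variable {k ℓ n x d L q : ℕ}

theorem isPermutation_crucialPerm (hk : 5 ≤ k) : IsPermutation n (crucialPerm k ℓ n) :=
  isPermutation_rankOn fun i hi j hj hij => by
    rw [Set.mem_Icc] at hi hj
    have := crucialSeq_injOn hk (Set.mem_Ici.2 (by omega)) (Set.mem_Ici.2 (by omega)) hij
    omega

theorem strictMonoOnAP_crucialPerm_iff (hx : 1 ≤ x) (hq₁ : 1 ≤ q)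
    (hq : x + (L - 1) * d + q = n + 1) :
    StrictMonoOnAP (crucialPerm k ℓ n) x d L ↔ StrictAntiOnAP (crucialSeq k ℓ) q d L :=
  (strictMonoOnAP_rankOn_iff hx (by omega)).trans (strictMonoOnAP_comp_reflect_iff hq)

theorem strictAntiOnAP_crucialPerm_iff (hx : 1 ≤ x) (hq₁ : 1 ≤ q)
    (hq : x + (L - 1) * d + q = n + 1) :
    StrictAntiOnAP (crucialPerm k ℓ n) x d L ↔ StrictMonoOnAP (crucialSeq k ℓ) q d L :=
  (strictAntiOnAP_rankOn_iff hx (by omega)).trans (strictAntiOnAP_comp_reflect_iff hq)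

theorem not_hasArithInc_crucialPerm (hk : 5 ≤ k) : ¬ HasArithInc n k (crucialPerm k ℓ n) := by
  rintro ⟨i, d, hi, hd, hlen, h⟩
  exact not_strictAntiOnAP_crucialSeq hk (by omega : 1 ≤ n + 1 - (i + (k - 1) * d)) hd
    ((strictMonoOnAP_crucialPerm_iff hi (by omega) (by omega)).1 h)

theorem not_hasArithDec_crucialPerm (hk : 5 ≤ k) (hkℓ : k ≤ ℓ) :
    ¬ HasArithDec n ℓ (crucialPerm k ℓ n) := by
  rintro ⟨i, d, hi, hd, hlen, h⟩
  exact not_strictMonoOnAP_crucialSeq hk hkℓ (by omega : 1 ≤ n + 1 - (i + (ℓ - 1) * d)) hd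
    ((strictAntiOnAP_crucialPerm_iff hi (by omega) (by omega)).1 h)

theorem strictAntiOnAP_crucialPerm_run (hℓ : 2 ≤ ℓ) (hℓn : ℓ ≤ n) :
    StrictAntiOnAP (crucialPerm k ℓ n) (n + 2 - ℓ) 1 (ℓ - 1) :=
  (strictAntiOnAP_crucialPerm_iff (q := 1) (by omega) le_rfl (by omega)).2 fun t ht =>
    crucialSeq_strictMonoOn_Iio (Set.mem_Iio.2 (by omega)) (Set.mem_Iio.2 (by omega)) (by omega)

theorem strictMonoOnAP_crucialPerm_chain (hk : 3 ≤ k) (hℓ : 0 < ℓ)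
    (hn : ℓ * (k - 1) ≤ n) :
    StrictMonoOnAP (crucialPerm k ℓ n) (n + 1 - ℓ * (k - 1)) ℓ (k - 1) := by
  have hlen : (k - 1 - 1) * ℓ + ℓ = ℓ * (k - 1) := by
    rw [← add_one_mul, Nat.sub_add_cancel (by omega), Nat.mul_comm]
  rw [strictMonoOnAP_crucialPerm_iff (q := ℓ) (by omega) hℓ (by omega),
    strictAntiOnAP_crucialSeq_iff_of_dvd hℓ dvd_rfl dvd_rfl, Nat.div_self hℓ, Nat.sub_self]
  intro t ht
  simpa using radicalInverse_strictMonoOn (by omega) (by omega : t < k - 1)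
    (by omega : t + 1 < k - 1) (by omega)

theorem crucialPerm_sub_lt_crucialPerm (hℓ : 2 ≤ ℓ) (hℓn : ℓ ≤ n) :
    crucialPerm k ℓ n (n + 1 - ℓ) < crucialPerm k ℓ n n := by
  refine (rankOn_lt_rankOn_iff (mem_Icc.2 ⟨by omega, le_rfl⟩)).2 ?_
  rw [show n + 1 - (n + 1 - ℓ) = ℓ by omega, Nat.add_sub_cancel_left,
    crucialSeq_of_dvd le_rfl dvd_rfl, crucialSeq_of_lt (by omega), Nat.div_self (by omega)]
  norm_num

theorem not_antiMonotone_extendRight_crucialPerm (hk : 3 ≤ k) (hℓ : 2 ≤ ℓ)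
    (hn : ℓ * (k - 1) ≤ n) (x : ℕ) :
    ¬ AntiMonotone (n + 1) k ℓ (ExtendRight n (crucialPerm k ℓ n) x) := by
  rintro ⟨hinc, hdec⟩
  have hℓn : ℓ ≤ n := le_trans (Nat.le_mul_of_pos_right ℓ (by omega)) hn
  by_cases hx : x ≤ crucialPerm k ℓ n n
  · have := hasArithDec_extendRight (n := n) (by omega) le_rfl (by omega)
      (strictAntiOnAP_crucialPerm_run hℓ hℓn) (by simpa using hx)
    exact hdec (by rwa [Nat.sub_add_cancel (by omega : 1 ≤ ℓ)] at this)
  · have := hasArithInc_extendRight (n := n) (x := x) (by omega) (by omega)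
      (by rw [Nat.mul_comm (k - 1) ℓ]; omega) (strictMonoOnAP_crucialPerm_chain hk (by omega) hn)
      ((crucialPerm_sub_lt_crucialPerm hℓ hℓn).trans (not_le.1 hx))
    exact hinc (by rwa [Nat.sub_add_cancel (by omega : 1 ≤ k)] at this)

end CrucialPerm

/-- For `5 ≤ k ≤ l` and every `n ≥ l*(k-1)`, there is a `(k,l)`-crucial
permutation of length `n`. -/
theorem crucial_exists_all_lengths (k l n : ℕ) (hk : 5 ≤ k) (hkl : k ≤ l)
    (hn : l * (k - 1) ≤ n) :
    ∃ π : ℕ → ℕ, Crucial n k l π :=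
  ⟨crucialPerm k l n, isPermutation_crucialPerm hk,
    ⟨not_hasArithInc_crucialPerm hk, not_hasArithDec_crucialPerm hk hkl⟩,
    fun x _ _ => not_antiMonotone_extendRight_crucialPerm (by omega) (by omega) hn x⟩
end

section
/- For all integers k, ℓ ≥ 3: if there exists a (k,ℓ)-crucial permutation of length n, then there exists a (k,ℓ)-crucial permutation of length 2n. -/
def IsArithChain (r : ℕ → ℕ → Prop) (π : ℕ → ℕ) (k i d : ℕ) : Prop :=
  ∀ j, j + 1 < k → r (π (i + j * d)) (π (i + (j + 1) * d))

-- `HasArithInc` and `HasArithDec` are `HasArithChain (· < ·)` and `HasArithChain (· > ·)`.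
def HasArithChain (r : ℕ → ℕ → Prop) (n k : ℕ) (π : ℕ → ℕ) : Prop :=
  ∃ i d : ℕ, 1 ≤ i ∧ 1 ≤ d ∧ i + (k - 1) * d ≤ n ∧ IsArithChain r π k i d

section ArithChain

variable {r s : ℕ → ℕ → Prop} {f g : ℕ → ℕ} {c e k i i' d : ℕ}

theorem affine_add_mul (hi : c * i = i' + e) (j : ℕ) :
    i' + j * (c * d) = c * (i + j * d) - e := by
  have : c * (i + j * d) = c * i + j * (c * d) := by ring
  omega

theorem isArithChain_affine_iff (hi : c * i = i' + e)
    (hfg : ∀ p, i ≤ p → g (c * p - e) = f p) :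
    IsArithChain r g k i' (c * d) ↔ IsArithChain r f k i d := by
  simp only [IsArithChain, affine_add_mul hi, hfg _ (Nat.le_add_right _ _)]

theorem HasArithChain.of_affine {m m' : ℕ} (hec : e < c) (hm : c * m - e ≤ m')
    (hfg : ∀ p q, 1 ≤ p → p ≤ m → 1 ≤ q → q ≤ m →
      r (f p) (f q) → s (g (c * p - e)) (g (c * q - e))) :
    HasArithChain r m k f → HasArithChain s m' k g := by
  rintro ⟨i, d, hi, hd, hlen, hchain⟩
  have hci : c ≤ c * i := Nat.le_mul_of_pos_right c hi
  have hci' : c * i = (c * i - e) + e := by omega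
  have hpos (j : ℕ) (hj : j ≤ k - 1) : 1 ≤ i + j * d ∧ i + j * d ≤ m := by
    have : j * d ≤ (k - 1) * d := Nat.mul_le_mul_right d hj
    omega
  refine ⟨c * i - e, c * d, by omega, Nat.mul_pos (by omega) hd, ?_, fun j hj => ?_⟩
  · have := affine_add_mul (d := d) hci' (k - 1)
    have : c * (i + (k - 1) * d) ≤ c * m := Nat.mul_le_mul_left c (hpos (k - 1) le_rfl).2
    omega
  · obtain ⟨hj₀, hjm₀⟩ := hpos j (by omega)
    obtain ⟨hj₁, hjm₁⟩ := hpos (j + 1) (by omega)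
    rw [affine_add_mul hci', affine_add_mul hci']
    exact hfg _ _ hj₀ hjm₀ hj₁ hjm₁ (hchain j hj)

end ArithChain

def doubling (n : ℕ) (π : ℕ → ℕ) : ℕ → ℕ :=
  fun i => if i % 2 = 1 then π ((i + 1) / 2) else π (i / 2) + n

section Doubling

variable {r : ℕ → ℕ → Prop} {n : ℕ} {π : ℕ → ℕ}

theorem doubling_two_mul_sub_one {p : ℕ} (hp : 1 ≤ p) : doubling n π (2 * p - 1) = π p := by
  simp only [doubling, show (2 * p - 1) % 2 = 1 by omega, show (2 * p - 1 + 1) / 2 = p by omega,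
    if_true]

theorem doubling_two_mul (p : ℕ) : doubling n π (2 * p) = π p + n := by
  simp only [doubling, show ¬ (2 * p) % 2 = 1 by omega, show 2 * p / 2 = p by omega, if_false]

theorem exists_doubling_eq {i : ℕ} (hi : 1 ≤ i) : ∃ p, 1 ≤ p ∧
    (i = 2 * p - 1 ∧ doubling n π i = π p ∨ i = 2 * p ∧ doubling n π i = π p + n) := by
  rcases Nat.even_or_odd' i with ⟨p, rfl | rfl⟩
  · exact ⟨p, by omega, Or.inr ⟨rfl, doubling_two_mul p⟩⟩
  · refine ⟨p + 1, by omega, Or.inl ⟨by omega, ?_⟩⟩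
    rw [show 2 * p + 1 = 2 * (p + 1) - 1 by omega, doubling_two_mul_sub_one (by omega)]

theorem isPermutation_doubling (hπ : IsPermutation n π) : IsPermutation (2 * n) (doubling n π) := by
  obtain ⟨hrange, hinj, hsurj⟩ := hπ
  refine ⟨fun i hi hin => ?_, fun i j hi hin hj hjn hij => ?_, fun v hv hvn => ?_⟩
  · obtain ⟨p, hp, ⟨rfl, he⟩ | ⟨rfl, he⟩⟩ := exists_doubling_eq (n := n) (π := π) hi <;>
      have := hrange p hp (by omega) <;> omega
  · obtain ⟨p, hp, ⟨rfl, hpe⟩ | ⟨rfl, hpe⟩⟩ := exists_doubling_eq (n := n) (π := π) hi <;>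
    obtain ⟨q, hq, ⟨rfl, hqe⟩ | ⟨rfl, hqe⟩⟩ := exists_doubling_eq (n := n) (π := π) hj <;>
    have := hrange p hp (by omega) <;> have := hrange q hq (by omega) <;>
    have := hinj p q hp (by omega) hq (by omega) <;> omega
  · by_cases hvn' : v ≤ n
    · obtain ⟨p, hp, hpn, rfl⟩ := hsurj v hv hvn'
      exact ⟨2 * p - 1, by omega, by omega, doubling_two_mul_sub_one hp⟩
    · obtain ⟨p, hp, hpn, hpv⟩ := hsurj (v - n) (by omega) (by omega)
      exact ⟨2 * p, by omega, by omega, by rw [doubling_two_mul]; omega⟩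

theorem doubling_le_iff (hπ : IsPermutation n π) {i : ℕ} (hi : 1 ≤ i) (hin : i ≤ 2 * n) :
    doubling n π i ≤ n ↔ i % 2 = 1 := by
  obtain ⟨p, hp, ⟨rfl, he⟩ | ⟨rfl, he⟩⟩ := exists_doubling_eq (n := n) (π := π) hi <;>
    have := hπ.1 p hp (by omega) <;> omega

theorem IsArithChain.of_doubling (hr : r = (· < ·) ∨ r = (· > ·)) {k i d : ℕ} (hi : 1 ≤ i)
    (h : IsArithChain r (doubling n π) k i (2 * d)) : IsArithChain r π k ((i + 1) / 2) d := by
  rcases Nat.even_or_odd' i with ⟨a, rfl | rfl⟩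
  · have hshift := (isArithChain_affine_iff (f := fun p => π p + n) (i := a) (e := 0) (by omega)
      fun p _ => doubling_two_mul p).1 h
    rw [show (2 * a + 1) / 2 = a by omega]
    intro j hj
    have := hshift j hj
    beta_reduce at this
    rcases hr with rfl | rfl <;> omega
  · rw [show (2 * a + 1 + 1) / 2 = a + 1 by omega]
    exact (isArithChain_affine_iff (e := 1) (by omega)
      fun p hp => doubling_two_mul_sub_one (by omega)).1 h

theorem not_hasArithChain_doubling (hr : r = (· < ·) ∨ r = (· > ·)) {k : ℕ} (hk : 3 ≤ k)
    (hπ : IsPermutation n π) (h : ¬ HasArithChain r n k π) :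
    ¬ HasArithChain r (2 * n) k (doubling n π) := by
  rintro ⟨i, d, hi, hd, hlen, hchain⟩
  by_cases hd2 : d % 2 = 0
  · obtain ⟨d, rfl⟩ : ∃ d', d = 2 * d' := ⟨d / 2, by omega⟩
    refine h ⟨(i + 1) / 2, d, by omega, by omega, ?_, hchain.of_doubling hr hi⟩
    have : (k - 1) * (2 * d) = 2 * ((k - 1) * d) := by ring
    omega
  · have h2d : i + 2 * d ≤ 2 * n := by
      have : 2 * d ≤ (k - 1) * d := Nat.mul_le_mul_right _ (by omega)
      omega
    have h0 := hchain 0 (by omega)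
    have h1 := hchain 1 (by omega)
    rw [zero_mul, add_zero, zero_add, one_mul] at h0
    rw [one_mul, show (1 + 1) * d = 2 * d by ring] at h1
    have := doubling_le_iff hπ hi (by omega)
    have := doubling_le_iff hπ (i := i + d) (by omega) (by omega)
    have := doubling_le_iff hπ (i := i + 2 * d) (by omega) (by omega)
    rcases hr with rfl | rfl <;> omega

theorem antiMonotone_doubling {k l : ℕ} (hk : 3 ≤ k) (hl : 3 ≤ l) (hπ : IsPermutation n π)
    (h : AntiMonotone n k l π) : AntiMonotone (2 * n) k l (doubling n π) :=
  ⟨not_hasArithChain_doubling (Or.inl rfl) hk hπ h.1,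
    not_hasArithChain_doubling (Or.inr rfl) hl hπ h.2⟩

theorem extendRight_doubling_lt_iff (hπ : IsPermutation n π) (x : ℕ) {p q : ℕ}
    (hp : 1 ≤ p) (hpn : p ≤ n + 1) (hq : 1 ≤ q) (hqn : q ≤ n + 1) :
    ExtendRight n π (min x (n + 1)) p < ExtendRight n π (min x (n + 1)) q ↔
      ExtendRight (2 * n) (doubling n π) x (2 * p - 1) <
        ExtendRight (2 * n) (doubling n π) x (2 * q - 1) := by
  have hπp : p ≤ n → 1 ≤ π p ∧ π p ≤ n := hπ.1 p hp
  have hπq : q ≤ n → 1 ≤ π q ∧ π q ≤ n := hπ.1 q hq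
  simp only [ExtendRight, doubling_two_mul_sub_one hp, doubling_two_mul_sub_one hq]
  split_ifs <;> omega

theorem hasArithChain_extendRight_doubling (hr : r = (· < ·) ∨ r = (· > ·))
    (hπ : IsPermutation n π) {k x : ℕ}
    (h : HasArithChain r (n + 1) k (ExtendRight n π (min x (n + 1)))) :
    HasArithChain r (2 * n + 1) k (ExtendRight (2 * n) (doubling n π) x) := by
  refine h.of_affine (c := 2) (e := 1) (by norm_num) (by omega) fun p q hp hpn hq hqn hpq => ?_
  rcases hr with rfl | rfl
  · exact (extendRight_doubling_lt_iff hπ x hp hpn hq hqn).1 hpq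
  · exact (extendRight_doubling_lt_iff hπ x hq hqn hp hpn).1 hpq

theorem AntiMonotone.of_extendRight_doubling (hπ : IsPermutation n π) {k l x : ℕ}
    (h : AntiMonotone (2 * n + 1) k l (ExtendRight (2 * n) (doubling n π) x)) :
    AntiMonotone (n + 1) k l (ExtendRight n π (min x (n + 1))) :=
  ⟨fun hc => h.1 (hasArithChain_extendRight_doubling (Or.inl rfl) hπ hc),
    fun hc => h.2 (hasArithChain_extendRight_doubling (Or.inr rfl) hπ hc)⟩

end Doubling

/-- If a `(k,l)`-crucial permutation of length `n` exists, then one of length `2*n`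
exists. -/
theorem crucial_double (k l n : ℕ) (hk : 3 ≤ k) (hl : 3 ≤ l)
    (h : ∃ π : ℕ → ℕ, Crucial n k l π) :
    ∃ σ : ℕ → ℕ, Crucial (2 * n) k l σ := by
  obtain ⟨π, hπ, hanti, hcrucial⟩ := h
  refine ⟨doubling n π, isPermutation_doubling hπ, antiMonotone_doubling hk hl hπ hanti,
    fun x hx hxn hσ => ?_⟩
  exact hcrucial (min x (n + 1)) (by omega) (by omega) (hσ.of_extendRight_doubling hπ)
end

section
/- For all integers k, ℓ ≥ 3: if there exists a (k,ℓ)-crucial permutation of length n, then there exists a (k,ℓ)-crucial permutation of length 2n+1. -/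
/-!
Interleave an anti-monotone permutation `τ` of length `n + 1` (at the odd positions) with the
crucial permutation `π` shifted up by `n + 1` (at the even positions). An arithmetic progression
of odd difference alternates between the low and the high values, so it is never monotone of
length three; one of even difference stays inside `τ` or inside `π`. Hence the interleaving is
anti-monotone, and extending it to the right by `x` restricts, on the even positions, to a
permutation order-isomorphic to an extension of `π`, which already contains a forbidden pattern.
Anti-monotone permutations of every length come from iterating the same interleaving.
-/

def IsArithChainAt (R : ℕ → ℕ → Prop) (k : ℕ) (π : ℕ → ℕ) (i d : ℕ) : Prop :=
  ∀ j, j + 1 < k → R (π (i + j * d)) (π (i + (j + 1) * d))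

-- `HasArithInc n k` and `HasArithDec n l` unfold to `ArithChain (· < ·) n k` and
-- `ArithChain (· > ·) n l`.
def ArithChain (R : ℕ → ℕ → Prop) (n k : ℕ) (π : ℕ → ℕ) : Prop :=
  ∃ i d : ℕ, 1 ≤ i ∧ 1 ≤ d ∧ i + (k - 1) * d ≤ n ∧ IsArithChainAt R k π i d

section ArithChain

variable {R S : ℕ → ℕ → Prop} {n k : ℕ} {f g : ℕ → ℕ}

theorem isArithChainAt_dilate_iff {c s i d : ℕ} (hs : s ≤ c) (hi : 1 ≤ i)
    (hfg : ∀ t, 1 ≤ t → f t = g (c * t - s)) :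
    IsArithChainAt R k f i d ↔ IsArithChainAt R k g (c * i - s) (c * d) := by
  have hsi : s ≤ c * i := hs.trans (Nat.le_mul_of_pos_right c hi)
  have hpos : ∀ j, c * (i + j * d) - s = c * i - s + j * (c * d) := fun j => by
    rw [mul_add, Nat.sub_add_comm hsi, mul_left_comm]
  refine forall₂_congr fun j _ => ?_
  rw [hfg _ (by omega), hfg _ (by omega), hpos, hpos]

theorem ArithChain.dilate {c s : ℕ} (hs : s < c) (hfg : ∀ t, 1 ≤ t → f t = g (c * t - s)) :
    ArithChain R n k f → ArithChain R (c * n - s) k g := by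
  rintro ⟨i, d, hi, hd, hn, hchain⟩
  have hci : c ≤ c * i := Nat.le_mul_of_pos_right c hi
  have hcd : c ≤ c * d := Nat.le_mul_of_pos_right c hd
  have hcn : c * i + c * ((k - 1) * d) ≤ c * n := by
    rw [← mul_add]; exact Nat.mul_le_mul_left c hn
  refine ⟨c * i - s, c * d, by omega, by omega, ?_,
    (isArithChainAt_dilate_iff hs.le hi hfg).1 hchain⟩
  rw [mul_left_comm]
  omega

theorem ArithChain.imp
    (h : ∀ p q, 1 ≤ p → p ≤ n → 1 ≤ q → q ≤ n → R (f p) (f q) → S (g p) (g q)) :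
    ArithChain R n k f → ArithChain S n k g := by
  rintro ⟨i, d, hi, hd, hn, hchain⟩
  refine ⟨i, d, hi, hd, hn, fun j hj => h _ _ (by omega) ?_ (by omega) ?_ (hchain j hj)⟩
  · have := Nat.mul_le_mul_right d (show j ≤ k - 1 by omega); omega
  · have := Nat.mul_le_mul_right d (show j + 1 ≤ k - 1 by omega); omega

end ArithChain

section AntiMonotone

variable {n k l : ℕ} {f g : ℕ → ℕ}

theorem AntiMonotone.of_lt_imp_lt
    (h : ∀ p q, 1 ≤ p → p ≤ n → 1 ≤ q → q ≤ n → f p < f q → g p < g q)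
    (hg : AntiMonotone n k l g) : AntiMonotone n k l f :=
  ⟨fun hf => hg.1 (ArithChain.imp (R := (· < ·)) h hf),
    fun hf => hg.2 (ArithChain.imp (R := (· > ·))
      (fun p q hp hp' hq hq' => h q p hq hq' hp hp') hf)⟩

theorem AntiMonotone.dilate {c s : ℕ} (hs : s < c) (hfg : ∀ t, 1 ≤ t → f t = g (c * t - s))
    (hg : AntiMonotone (c * n - s) k l g) : AntiMonotone n k l f :=
  ⟨fun hf => hg.1 (ArithChain.dilate (R := (· < ·)) hs hfg hf),
    fun hf => hg.2 (ArithChain.dilate (R := (· > ·)) hs hfg hf)⟩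

end AntiMonotone

def interleave (a : ℕ) (α β : ℕ → ℕ) : ℕ → ℕ :=
  fun p => if p % 2 = 1 then α ((p + 1) / 2) else a + β (p / 2)

section Interleave

variable {a b : ℕ} {α β : ℕ → ℕ}

theorem interleave_two_mul_add_one (t : ℕ) : interleave a α β (2 * t + 1) = α (t + 1) := by
  simp only [interleave]
  rw [if_pos (by omega)]
  congr 1
  omega

theorem interleave_two_mul_sub_one {t : ℕ} (ht : 1 ≤ t) :
    interleave a α β (2 * t - 1) = α t := by
  obtain ⟨u, rfl⟩ := Nat.exists_eq_add_of_le' ht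
  rw [show 2 * (u + 1) - 1 = 2 * u + 1 by omega, interleave_two_mul_add_one]

theorem interleave_two_mul (t : ℕ) : interleave a α β (2 * t) = a + β t := by
  simp only [interleave]
  rw [if_neg (by omega)]
  congr 2
  omega

theorem IsPermutation.interleave (hba : b ≤ a) (hab : a ≤ b + 1) (hα : IsPermutation a α)
    (hβ : IsPermutation b β) : IsPermutation (a + b) (interleave a α β) := by
  obtain ⟨hα_range, hα_inj, hα_surj⟩ := hα
  obtain ⟨hβ_range, hβ_inj, hβ_surj⟩ := hβ
  refine ⟨fun p hp hp' => ?_, fun p q hp hp' hq hq' heq => ?_, fun v hv hv' => ?_⟩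
  · obtain ⟨t, rfl | rfl⟩ := Nat.even_or_odd' p
    · rw [interleave_two_mul]; have := hβ_range t (by omega) (by omega); omega
    · rw [interleave_two_mul_add_one]; have := hα_range (t + 1) (by omega) (by omega); omega
  · obtain ⟨t, rfl | rfl⟩ := Nat.even_or_odd' p <;>
      obtain ⟨u, rfl | rfl⟩ := Nat.even_or_odd' q <;>
      simp only [interleave_two_mul, interleave_two_mul_add_one] at heq
    · have := hβ_inj t u (by omega) (by omega) (by omega) (by omega) (by omega); omega
    · have := hα_range (u + 1) (by omega) (by omega)
      have := hβ_range t (by omega) (by omega)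
      omega
    · have := hα_range (t + 1) (by omega) (by omega)
      have := hβ_range u (by omega) (by omega)
      omega
    · have := hα_inj (t + 1) (u + 1) (by omega) (by omega) (by omega) (by omega) heq; omega
  · by_cases hva : v ≤ a
    · obtain ⟨t, ht, ht', rfl⟩ := hα_surj v hv hva
      exact ⟨2 * t - 1, by omega, by omega, interleave_two_mul_sub_one ht⟩
    · obtain ⟨t, ht, ht', htv⟩ := hβ_surj (v - a) (by omega) (by omega)
      exact ⟨2 * t, by omega, by omega, by rw [interleave_two_mul, htv]; omega⟩

theorem interleave_le_iff (hba : b ≤ a) (hab : a ≤ b + 1) (hα : IsPermutation a α)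
    (hβ : IsPermutation b β) {p : ℕ} (hp : 1 ≤ p) (hp' : p ≤ a + b) :
    interleave a α β p ≤ a ↔ p % 2 = 1 := by
  obtain ⟨t, rfl | rfl⟩ := Nat.even_or_odd' p
  · rw [interleave_two_mul]; have := hβ.1 t (by omega) (by omega); omega
  · rw [interleave_two_mul_add_one]; have := hα.1 (t + 1) (by omega) (by omega); omega

variable {R : ℕ → ℕ → Prop} {k : ℕ}

theorem not_isArithChainAt_interleave_of_odd (hR : R = (· < ·) ∨ R = (· > ·)) (hk : 3 ≤ k)
    (hba : b ≤ a) (hab : a ≤ b + 1) (hα : IsPermutation a α) (hβ : IsPermutation b β)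
    {i d : ℕ} (hi : 1 ≤ i) (hd : d % 2 = 1) (hn : i + (k - 1) * d ≤ a + b) :
    ¬ IsArithChainAt R k (interleave a α β) i d := by
  intro hchain
  have h₀ := hchain 0 (by omega)
  have h₁ := hchain 1 (by omega)
  simp only [zero_mul, add_zero, zero_add, one_mul, one_add_one_eq_two] at h₀ h₁
  have h2d := Nat.mul_le_mul_right d (show 2 ≤ k - 1 by omega)
  have := interleave_le_iff hba hab hα hβ (p := i) hi (by omega)
  have := interleave_le_iff hba hab hα hβ (p := i + d) (by omega) (by omega)
  have := interleave_le_iff hba hab hα hβ (p := i + 2 * d) (by omega) (by omega)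
  rcases hR with rfl | rfl <;> omega

theorem not_arithChain_interleave (hR : R = (· < ·) ∨ R = (· > ·)) (hk : 3 ≤ k)
    (hba : b ≤ a) (hab : a ≤ b + 1) (hαp : IsPermutation a α) (hβp : IsPermutation b β)
    (hα : ¬ ArithChain R a k α) (hβ : ¬ ArithChain R b k β) :
    ¬ ArithChain R (a + b) k (interleave a α β) := by
  rintro ⟨i, d, hi, hd, hn, hchain⟩
  obtain ⟨e, rfl | rfl⟩ := Nat.even_or_odd' d
  · rw [mul_left_comm] at hn
    obtain ⟨c, rfl | rfl⟩ := Nat.even_or_odd' i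
    · have hshift : ∀ p q, 1 ≤ p → p ≤ b → 1 ≤ q → q ≤ b →
          R (a + β p) (a + β q) → R (β p) (β q) := by
        rcases hR with rfl | rfl <;> intro p q _ _ _ _ h <;> omega
      refine hβ (ArithChain.imp hshift ⟨c, e, by omega, by omega, by omega, ?_⟩)
      refine (isArithChainAt_dilate_iff (c := 2) (s := 0) (by omega) (by omega)
        (fun t _ => (interleave_two_mul (α := α) t).symm)).2 ?_
      rwa [Nat.sub_zero]
    · refine hα ⟨c + 1, e, by omega, by omega, by omega, ?_⟩
      refine (isArithChainAt_dilate_iff (s := 1) (by omega) (by omega)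
        (fun t ht => (interleave_two_mul_sub_one (a := a) (β := β) ht).symm)).2 ?_
      rwa [show 2 * (c + 1) - 1 = 2 * c + 1 by omega]
  · exact not_isArithChainAt_interleave_of_odd hR hk hba hab hαp hβp hi (by omega) hn hchain

theorem AntiMonotone.interleave {l : ℕ} (hk : 3 ≤ k) (hl : 3 ≤ l) (hba : b ≤ a)
    (hab : a ≤ b + 1) (hαp : IsPermutation a α) (hβp : IsPermutation b β)
    (hα : AntiMonotone a k l α) (hβ : AntiMonotone b k l β) :
    AntiMonotone (a + b) k l (interleave a α β) :=
  ⟨not_arithChain_interleave (Or.inl rfl) hk hba hab hαp hβp hα.1 hβ.1,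
    not_arithChain_interleave (Or.inr rfl) hl hba hab hαp hβp hα.2 hβ.2⟩

end Interleave

theorem exists_isPermutation_antiMonotone {k l : ℕ} (hk : 3 ≤ k) (hl : 3 ≤ l) (m : ℕ) :
    ∃ τ : ℕ → ℕ, IsPermutation m τ ∧ AntiMonotone m k l τ := by
  induction m using Nat.strong_induction_on with
  | _ m ih =>
  rcases le_or_gt m 1 with hm | hm
  · refine ⟨id, ⟨fun i hi hi' => ⟨hi, hi'⟩, fun i j _ _ _ _ h => h,
      fun v hv hv' => ⟨v, hv, hv', rfl⟩⟩, ?_, ?_⟩ <;>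
    · rintro ⟨i, d, hi, hd, hn, -⟩
      have := Nat.mul_le_mul_right d (show 2 ≤ k - 1 by omega)
      have := Nat.mul_le_mul_right d (show 2 ≤ l - 1 by omega)
      omega
  · obtain ⟨α, hαp, hα⟩ := ih ((m + 1) / 2) (by omega)
    obtain ⟨β, hβp, hβ⟩ := ih (m / 2) (by omega)
    refine ⟨interleave ((m + 1) / 2) α β, ?_, ?_⟩
    · convert hαp.interleave (by omega) (by omega) hβp using 1; omega
    · convert hα.interleave hk hl (by omega) (by omega) hαp hβp hβ using 1; omega

theorem exists_extendRight_lt_imp_lt {n : ℕ} {π : ℕ → ℕ} (hπ : IsPermutation n π)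
    (τ : ℕ → ℕ) {x : ℕ} (hx : x ≤ 2 * n + 2) :
    ∃ y, 1 ≤ y ∧ y ≤ n + 1 ∧ ∀ p q, 1 ≤ p → p ≤ n + 1 → 1 ≤ q → q ≤ n + 1 →
      ExtendRight n π y p < ExtendRight n π y q →
      ExtendRight (2 * n + 1) (interleave (n + 1) τ π) x (2 * p) <
        ExtendRight (2 * n + 1) (interleave (n + 1) τ π) x (2 * q) := by
  -- For `x ≤ n + 1` the new last entry lies below every even-position entry,
  -- just as `1` does when extending `π`.
  refine ⟨if x ≤ n + 1 then 1 else x - (n + 1), by split_ifs <;> omega,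
    by split_ifs <;> omega, fun p q hp hp' hq hq' hlt => ?_⟩
  have hval : ∀ t, 1 ≤ t → t ≤ n + 1 → t = n + 1 ∨ (t ≤ n ∧ 1 ≤ π t ∧ π t ≤ n) :=
    fun t ht ht' => (eq_or_lt_of_le ht').imp_right
      fun ht'' => ⟨by omega, hπ.1 t ht (by omega)⟩
  simp only [ExtendRight, interleave_two_mul] at hlt ⊢
  rcases hval p hp hp' with rfl | ⟨_, _, _⟩ <;>
    rcases hval q hq hq' with rfl | ⟨_, _, _⟩ <;>
    split_ifs at hlt ⊢ <;> omega

/-- If a `(k,l)`-crucial permutation of length `n` exists, then one of length `2*n+1`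
exists. -/
theorem crucial_double_plus_one (k l n : ℕ) (hk : 3 ≤ k) (hl : 3 ≤ l)
    (h : ∃ π : ℕ → ℕ, Crucial n k l π) :
    ∃ σ : ℕ → ℕ, Crucial (2 * n + 1) k l σ := by
  obtain ⟨π, hπ, hπanti, hπcrucial⟩ := h
  obtain ⟨τ, hτ, hτanti⟩ := exists_isPermutation_antiMonotone hk hl (n + 1)
  have hlen : n + 1 + n = 2 * n + 1 := by ring
  refine ⟨interleave (n + 1) τ π, hlen ▸ hτ.interleave (by omega) le_rfl hπ,
    hlen ▸ hτanti.interleave hk hl (by omega) le_rfl hτ hπ hπanti, fun x _ hx hanti => ?_⟩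
  obtain ⟨y, hy, hy', hlt⟩ := exists_extendRight_lt_imp_lt hπ τ hx
  refine hπcrucial y hy hy' (AntiMonotone.of_lt_imp_lt hlt ?_)
  exact AntiMonotone.dilate (c := 2) (s := 0) two_pos (fun _ _ => rfl) hanti
end

section
/- For all integers k, ℓ ≥ 3: if there exists a (k,ℓ)-bicrucial permutation of even length n, then there exists a (k,ℓ)-bicrucial permutation of (odd) length 2n+1. -/
/-!
Write `n = 2 * m` and let `σ = doubled m π`, of length `4 * m + 1`: `σ (2 * a) = π a`, and the
odd positions carry the values above `2 * m`, the positions `4 * a - 3` the top `m + 1` values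
in the relative order of `π 1, …, π (m + 1)`, the positions `4 * a - 1` the middle `m` values in
the relative order of `π 1, …, π m`. A monotone arithmetic triple of `σ` cannot alternate between
these three bands of values, so an arithmetic run of length at least three lies on the even
positions, or on one residue class mod 4 with difference divisible by 4; either way it copies a
run of `π`. Conversely, an extension of `σ` to the right (left), read on the positions `2 * a`
(`2 * a - 1`), is an extension of `π` to the right (left), up to lowering a new value above
`2 * m + 1` to `2 * m + 1`, which does not change the relative order; so it contains the patterns
that the extensions of `π` contain.
-/

open Finset

def ArithRun (N c : ℕ) (R : ℕ → ℕ → Prop) (f : ℕ → ℕ) : Prop :=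
  ∃ i d : ℕ, 1 ≤ i ∧ 1 ≤ d ∧ i + (c - 1) * d ≤ N ∧
    ∀ j, j + 1 < c → R (f (i + j * d)) (f (i + (j + 1) * d))

theorem antiMonotone_iff {N k l : ℕ} {f : ℕ → ℕ} :
    AntiMonotone N k l f ↔ ¬ ArithRun N k (· < ·) f ∧ ¬ ArithRun N l (· > ·) f :=
  Iff.rfl

def OrderEquivOn (N : ℕ) (f g : ℕ → ℕ) : Prop :=
  ∀ a b, 1 ≤ a → a ≤ N → 1 ≤ b → b ≤ N → (f a < f b ↔ g a < g b)

namespace ArithRun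

variable {N M c : ℕ} {R : ℕ → ℕ → Prop} {f g : ℕ → ℕ}

private theorem index_mem {i d j : ℕ} (hi : 1 ≤ i) (hb : i + (c - 1) * d ≤ N) (hj : j < c) :
    1 ≤ i + j * d ∧ i + j * d ≤ N :=
  ⟨by omega, by have := Nat.mul_le_mul_right d (show j ≤ c - 1 by omega); omega⟩

theorem mono (h : ArithRun N c R f) (hNM : N ≤ M) : ArithRun M c R f := by
  obtain ⟨i, d, hi, hd, hb, hrun⟩ := h
  exact ⟨i, d, hi, hd, hb.trans hNM, hrun⟩

theorem of_orderEquivOn (hR : R = (· < ·) ∨ R = (· > ·)) (hfg : OrderEquivOn N f g)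
    (h : ArithRun N c R f) : ArithRun N c R g := by
  obtain ⟨i, d, hi, hd, hb, hrun⟩ := h
  refine ⟨i, d, hi, hd, hb, fun j hj => ?_⟩
  obtain ⟨h₁, h₂⟩ := index_mem (j := j) hi hb (by omega)
  obtain ⟨h₃, h₄⟩ := index_mem (j := j + 1) hi hb hj
  rcases hR with rfl | rfl
  · exact (hfg _ _ h₁ h₂ h₃ h₄).1 (hrun j hj)
  · exact (hfg _ _ h₃ h₄ h₁ h₂).1 (hrun j hj)

private theorem affine_step {s o i d j : ℕ} (ho : o ≤ s) (hi : 1 ≤ i) :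
    s * i - o + j * (s * d) = s * (i + j * d) - o := by
  have : o ≤ s * i := ho.trans (Nat.le_mul_of_pos_right s hi)
  have : s * (i + j * d) = s * i + j * (s * d) := by ring
  omega

theorem of_comp_affine {s o : ℕ} (ho : o < s) (hM : s * N - o ≤ M)
    (h : ArithRun N c R (fun a => g (s * a - o))) : ArithRun M c R g := by
  obtain ⟨i, d, hi, hd, hb, hrun⟩ := h
  have hsi : s ≤ s * i := Nat.le_mul_of_pos_right s hi
  refine ⟨s * i - o, s * d, by omega, Nat.mul_pos (by omega) hd, ?_,
    fun j hj => ?_⟩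
  · rw [affine_step ho.le hi]
    exact (Nat.sub_le_sub_right (Nat.mul_le_mul_left s hb) o).trans hM
  · rw [affine_step ho.le hi, affine_step ho.le hi]
    exact hrun j hj

theorem comp_affine {s o i d : ℕ} (ho : o < s) (hi : 1 ≤ i) (hd : 1 ≤ d)
    (hb : i + (c - 1) * d ≤ M) (hsi : s ∣ i + o) (hsd : s ∣ d)
    (hrun : ∀ j, j + 1 < c → R (g (i + j * d)) (g (i + (j + 1) * d))) :
    ArithRun ((M + o) / s) c R (fun a => g (s * a - o)) := by
  obtain ⟨i', hi'⟩ := hsi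
  obtain ⟨d', rfl⟩ := hsd
  have hi'pos : 1 ≤ i' := Nat.one_le_iff_ne_zero.2 (by rintro rfl; omega)
  have hi : s * i' - o = i := by omega
  refine ⟨i', d', hi'pos, Nat.one_le_iff_ne_zero.2 (by rintro rfl; omega), ?_,
    fun j hj => ?_⟩
  · rw [Nat.le_div_iff_mul_le (by omega)]
    have : (i' + (c - 1) * d') * s = i + o + (c - 1) * (s * d') := by rw [hi']; ring
    omega
  · beta_reduce
    rw [← affine_step ho.le hi'pos, ← affine_step ho.le hi'pos, hi]
    exact hrun j hj

end ArithRun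

theorem OrderEquivOn.symm {N : ℕ} {f g : ℕ → ℕ} (h : OrderEquivOn N f g) :
    OrderEquivOn N g f :=
  fun a b ha₁ ha₂ hb₁ hb₂ => (h a b ha₁ ha₂ hb₁ hb₂).symm

theorem OrderEquivOn.antiMonotone_iff {N k l : ℕ} {f g : ℕ → ℕ} (h : OrderEquivOn N f g) :
    AntiMonotone N k l f ↔ AntiMonotone N k l g := by
  simp only [_root_.antiMonotone_iff]
  exact ⟨fun ⟨hi, hd⟩ => ⟨mt (.of_orderEquivOn (.inl rfl) h.symm) hi,
      mt (.of_orderEquivOn (.inr rfl) h.symm) hd⟩,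
    fun ⟨hi, hd⟩ => ⟨mt (.of_orderEquivOn (.inl rfl) h) hi,
      mt (.of_orderEquivOn (.inr rfl) h) hd⟩⟩

theorem AntiMonotone.comp_affine {N M k l s o : ℕ} {g : ℕ → ℕ} (ho : o < s)
    (hM : s * N - o ≤ M) (h : AntiMonotone M k l g) :
    AntiMonotone N k l (fun a => g (s * a - o)) :=
  ⟨mt (ArithRun.of_comp_affine ho hM) h.1, mt (ArithRun.of_comp_affine ho hM) h.2⟩

theorem isPermutation_of_mapsTo_of_injOn {n : ℕ} {f : ℕ → ℕ}
    (hmaps : Set.MapsTo f (Set.Icc 1 n) (Set.Icc 1 n)) (hinj : Set.InjOn f (Set.Icc 1 n)) :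
    IsPermutation n f := by
  have hsurj := (((Set.finite_Icc 1 n).injOn_iff_bijOn_of_mapsTo hmaps).1 hinj).surjOn
  refine ⟨fun i hi₁ hi₂ => hmaps ⟨hi₁, hi₂⟩, fun i j hi₁ hi₂ hj₁ hj₂ h =>
    hinj ⟨hi₁, hi₂⟩ ⟨hj₁, hj₂⟩ h, fun v hv₁ hv₂ => ?_⟩
  obtain ⟨i, ⟨hi₁, hi₂⟩, hiv⟩ := hsurj ⟨hv₁, hv₂⟩
  exact ⟨i, hi₁, hi₂, hiv⟩

theorem IsPermutation.injOn {n : ℕ} {f : ℕ → ℕ} (h : IsPermutation n f) :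
    Set.InjOn f (Set.Icc 1 n) :=
  fun _ ha _ hb hab => h.2.1 _ _ ha.1 ha.2 hb.1 hb.2 hab

theorem orderEquivOn_extendRight {n x y : ℕ} {π : ℕ → ℕ}
    (hxy : ∀ i, 1 ≤ i → i ≤ n → (x ≤ π i ↔ y ≤ π i)) :
    OrderEquivOn (n + 1) (ExtendRight n π x) (ExtendRight n π y) := by
  intro a b ha₁ ha₂ hb₁ hb₂
  simp only [ExtendRight]
  split_ifs <;> grind

theorem orderEquivOn_extendLeft {n x y : ℕ} {π : ℕ → ℕ}
    (hxy : ∀ i, 1 ≤ i → i ≤ n → (x ≤ π i ↔ y ≤ π i)) :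
    OrderEquivOn (n + 1) (ExtendLeft π x) (ExtendLeft π y) := by
  intro a b ha₁ ha₂ hb₁ hb₂
  simp only [ExtendLeft]
  split_ifs <;> grind

def valueRank (M : ℕ) (f : ℕ → ℕ) (a : ℕ) : ℕ :=
  #{t ∈ Icc 1 M | f t ≤ f a}

section valueRank

variable {M : ℕ} {f : ℕ → ℕ} {a b : ℕ}

theorem one_le_valueRank (ha₁ : 1 ≤ a) (ha₂ : a ≤ M) : 1 ≤ valueRank M f a :=
  card_pos.2 ⟨a, by simp [ha₁, ha₂]⟩

theorem valueRank_le : valueRank M f a ≤ M :=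
  (card_filter_le _ _).trans (by simp)

theorem valueRank_le_valueRank (h : f a ≤ f b) : valueRank M f a ≤ valueRank M f b :=
  card_le_card <| monotone_filter_right _ fun _ _ ht => ht.trans h

theorem valueRank_lt_valueRank_iff (hb₁ : 1 ≤ b) (hb₂ : b ≤ M) :
    valueRank M f a < valueRank M f b ↔ f a < f b := by
  refine ⟨fun h => lt_of_not_ge fun hba => h.not_ge (valueRank_le_valueRank hba),
    fun h => card_lt_card ?_⟩
  refine (ssubset_iff_of_subset <| monotone_filter_right _ fun _ _ ht => ht.trans h.le).2
    ⟨b, by simp [hb₁, hb₂], by simp [h]⟩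

theorem valueRank_injOn (hf : Set.InjOn f (Set.Icc 1 M)) :
    Set.InjOn (valueRank M f) (Set.Icc 1 M) := by
  intro a ha b hb h
  refine hf ha hb (le_antisymm (not_lt.1 fun hlt => ?_) (not_lt.1 fun hlt => ?_))
  · exact ((valueRank_lt_valueRank_iff ha.1 ha.2).2 hlt).ne h.symm
  · exact ((valueRank_lt_valueRank_iff hb.1 hb.2).2 hlt).ne h

end valueRank

def doubled (m : ℕ) (π : ℕ → ℕ) (p : ℕ) : ℕ :=
  if p % 2 = 0 then π (p / 2)
  else if p % 4 = 1 then 3 * m + valueRank (m + 1) π ((p + 3) / 4)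
  else 2 * m + valueRank m π ((p + 1) / 4)

section doubled

variable {m : ℕ} {π : ℕ → ℕ}

theorem doubled_two_mul (a : ℕ) : doubled m π (2 * a) = π a := by
  simp [doubled]

theorem doubled_four_mul_sub_three {a : ℕ} (ha : 1 ≤ a) :
    doubled m π (4 * a - 3) = 3 * m + valueRank (m + 1) π a := by
  simp only [doubled]
  rw [if_neg (by omega), if_pos (by omega), show (4 * a - 3 + 3) / 4 = a by omega]

theorem doubled_four_mul_sub_one {a : ℕ} (ha : 1 ≤ a) :
    doubled m π (4 * a - 1) = 2 * m + valueRank m π a := by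
  simp only [doubled]
  rw [if_neg (by omega), if_neg (by omega), show (4 * a - 1 + 1) / 4 = a by omega]

theorem doubled_mem_bands (hπ : ∀ i, 1 ≤ i → i ≤ 2 * m → 1 ≤ π i ∧ π i ≤ 2 * m)
    {p : ℕ} (hp₁ : 1 ≤ p) (hp₂ : p ≤ 4 * m + 1) :
    (p % 2 = 0 ∧ 1 ≤ doubled m π p ∧ doubled m π p ≤ 2 * m) ∨
    (p % 4 = 1 ∧ 3 * m + 1 ≤ doubled m π p ∧ doubled m π p ≤ 4 * m + 1) ∨
    (p % 4 = 3 ∧ 2 * m + 1 ≤ doubled m π p ∧ doubled m π p ≤ 3 * m) := by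
  rcases (by omega : p % 2 = 0 ∨ p % 4 = 1 ∨ p % 4 = 3) with h | h | h
  · obtain ⟨a, rfl⟩ : ∃ a, p = 2 * a := ⟨p / 2, by omega⟩
    rw [doubled_two_mul]
    exact .inl ⟨h, hπ a (by omega) (by omega)⟩
  · obtain ⟨a, rfl⟩ : ∃ a, p = 4 * a - 3 := ⟨(p + 3) / 4, by omega⟩
    have := one_le_valueRank (M := m + 1) (f := π) (a := a) (by omega) (by omega)
    have := valueRank_le (M := m + 1) (f := π) (a := a)
    rw [doubled_four_mul_sub_three (by omega)]
    exact .inr (.inl ⟨h, by omega, by omega⟩)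
  · obtain ⟨a, rfl⟩ : ∃ a, p = 4 * a - 1 := ⟨(p + 1) / 4, by omega⟩
    have := one_le_valueRank (M := m) (f := π) (a := a) (by omega) (by omega)
    have := valueRank_le (M := m) (f := π) (a := a)
    rw [doubled_four_mul_sub_one (by omega)]
    exact .inr (.inr ⟨h, by omega, by omega⟩)

theorem isPermutation_doubled (hπ : IsPermutation (2 * m) π) :
    IsPermutation (4 * m + 1) (doubled m π) := by
  refine isPermutation_of_mapsTo_of_injOn (fun p ⟨hp₁, hp₂⟩ => ?_) ?_
  · constructor <;> rcases doubled_mem_bands hπ.1 hp₁ hp₂ with h | h | h <;> omega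
  intro p ⟨hp₁, hp₂⟩ q ⟨hq₁, hq₂⟩ h
  have hinj := hπ.injOn
  have hinjC : Set.InjOn π (Set.Icc 1 (m + 1)) := fun a ⟨ha₁, ha₂⟩ b ⟨hb₁, hb₂⟩ hab => by
    by_cases hm : m = 0
    · omega
    · exact hinj ⟨ha₁, by omega⟩ ⟨hb₁, by omega⟩ hab
  rcases doubled_mem_bands hπ.1 hp₁ hp₂ with ⟨hp, hp'⟩ | ⟨hp, hp'⟩ | ⟨hp, hp'⟩ <;>
    rcases doubled_mem_bands hπ.1 hq₁ hq₂ with ⟨hq, hq'⟩ | ⟨hq, hq'⟩ | ⟨hq, hq'⟩ <;>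
    try omega
  · obtain ⟨a, rfl⟩ : ∃ a, p = 2 * a := ⟨p / 2, by omega⟩
    obtain ⟨b, rfl⟩ : ∃ b, q = 2 * b := ⟨q / 2, by omega⟩
    rw [doubled_two_mul, doubled_two_mul] at h
    obtain rfl : a = b := hinj ⟨by omega, by omega⟩ ⟨by omega, by omega⟩ h
    rfl
  · obtain ⟨a, rfl⟩ : ∃ a, p = 4 * a - 3 := ⟨(p + 3) / 4, by omega⟩
    obtain ⟨b, rfl⟩ : ∃ b, q = 4 * b - 3 := ⟨(q + 3) / 4, by omega⟩
    rw [doubled_four_mul_sub_three (by omega), doubled_four_mul_sub_three (by omega)] at h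
    obtain rfl : a = b := valueRank_injOn hinjC
      ⟨by omega, by omega⟩ ⟨by omega, by omega⟩ (by omega)
    rfl
  · obtain ⟨a, rfl⟩ : ∃ a, p = 4 * a - 1 := ⟨(p + 1) / 4, by omega⟩
    obtain ⟨b, rfl⟩ : ∃ b, q = 4 * b - 1 := ⟨(q + 1) / 4, by omega⟩
    rw [doubled_four_mul_sub_one (by omega), doubled_four_mul_sub_one (by omega)] at h
    obtain rfl : a = b :=
      valueRank_injOn (M := m) (hinj.mono (Set.Icc_subset_Icc_right (by omega)))
        ⟨by omega, by omega⟩ ⟨by omega, by omega⟩ (by omega)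
    rfl

theorem doubled_chain_dvd {R : ℕ → ℕ → Prop} (hR : R = (· < ·) ∨ R = (· > ·))
    (hπ : ∀ i, 1 ≤ i → i ≤ 2 * m → 1 ≤ π i ∧ π i ≤ 2 * m) {i d : ℕ} (hi : 1 ≤ i)
    (hd : 1 ≤ d) (hb : i + 2 * d ≤ 4 * m + 1)
    (h₁ : R (doubled m π i) (doubled m π (i + d)))
    (h₂ : R (doubled m π (i + d)) (doubled m π (i + 2 * d))) :
    (2 ∣ i ∧ 2 ∣ d) ∨ (4 ∣ i + 3 ∧ 4 ∣ d) ∨ (4 ∣ i + 1 ∧ 4 ∣ d) := by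
  rcases hR with rfl | rfl <;>
  rcases doubled_mem_bands hπ hi (by omega) with h | h | h <;>
  rcases doubled_mem_bands hπ (p := i + d) (by omega) (by omega) with h' | h' | h' <;>
  rcases doubled_mem_bands hπ (p := i + 2 * d) (by omega) (by omega) with h'' | h'' | h'' <;>
  omega

theorem orderEquivOn_doubled_four_mul_sub_three :
    OrderEquivOn (m + 1) (fun a => doubled m π (4 * a - 3)) π := by
  intro a b ha₁ _ hb₁ hb₂
  simp only [doubled_four_mul_sub_three ha₁, doubled_four_mul_sub_three hb₁,
    Nat.add_lt_add_iff_left]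
  exact valueRank_lt_valueRank_iff hb₁ hb₂

theorem orderEquivOn_doubled_four_mul_sub_one :
    OrderEquivOn m (fun a => doubled m π (4 * a - 1)) π := by
  intro a b ha₁ _ hb₁ hb₂
  simp only [doubled_four_mul_sub_one ha₁, doubled_four_mul_sub_one hb₁,
    Nat.add_lt_add_iff_left]
  exact valueRank_lt_valueRank_iff hb₁ hb₂

theorem not_arithRun_doubled {c : ℕ} {R : ℕ → ℕ → Prop} (hR : R = (· < ·) ∨ R = (· > ·))
    (hc : 3 ≤ c) (hπ : IsPermutation (2 * m) π) (h : ¬ ArithRun (2 * m) c R π) :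
    ¬ ArithRun (4 * m + 1) c R (doubled m π) := by
  rintro ⟨i, d, hi, hd, hb, hrun⟩
  have hb₂ : i + 2 * d ≤ 4 * m + 1 := by
    have := Nat.mul_le_mul_right d (show 2 ≤ c - 1 by omega)
    omega
  have h₁ : R (doubled m π i) (doubled m π (i + d)) := by simpa using hrun 0 (by omega)
  have h₂ : R (doubled m π (i + d)) (doubled m π (i + 2 * d)) := by
    simpa using hrun 1 (by omega)
  rcases doubled_chain_dvd hR hπ.1 hi hd hb₂ h₁ h₂ with ⟨hi', hd'⟩ | ⟨hi', hd'⟩ | ⟨hi', hd'⟩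
  · have := ArithRun.comp_affine (s := 2) (o := 0) (by norm_num) hi hd hb hi' hd' hrun
    simp only [Nat.sub_zero, doubled_two_mul] at this
    exact h (this.mono (by omega))
  · have := ArithRun.comp_affine (by norm_num) hi hd hb hi' hd' hrun
    rw [show (4 * m + 1 + 3) / 4 = m + 1 by omega] at this
    exact h ((this.of_orderEquivOn hR orderEquivOn_doubled_four_mul_sub_three).mono
      (by omega))
  · have := ArithRun.comp_affine (by norm_num) hi hd hb hi' hd' hrun
    rw [show (4 * m + 1 + 1) / 4 = m by omega] at this
    exact h ((this.of_orderEquivOn hR orderEquivOn_doubled_four_mul_sub_one).mono (by omega))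

theorem extendRight_doubled (x a : ℕ) :
    ExtendRight (4 * m + 1) (doubled m π) x (2 * a) = ExtendRight (2 * m) π x a := by
  simp only [ExtendRight, doubled_two_mul, show 2 * a = 4 * m + 1 + 1 ↔ a = 2 * m + 1 by omega]

theorem extendLeft_doubled (x a : ℕ) :
    ExtendLeft (doubled m π) x (2 * a - 1) = ExtendLeft π x a := by
  rcases a with _ | _ | a
  · simp [ExtendLeft, doubled]
  · simp [ExtendLeft]
  · simp only [ExtendLeft, show 2 * (a + 2) - 1 - 1 = 2 * (a + 1) by omega, doubled_two_mul]
    simp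

theorem Crucial.doubled {k l : ℕ} (hk : 3 ≤ k) (hl : 3 ≤ l) (hπ : Crucial (2 * m) k l π) :
    Crucial (4 * m + 1) k l (doubled m π) := by
  obtain ⟨hperm, hanti, hext⟩ := hπ
  refine ⟨isPermutation_doubled hperm, ⟨not_arithRun_doubled (.inl rfl) hk hperm hanti.1,
    not_arithRun_doubled (.inr rfl) hl hperm hanti.2⟩, fun x hx₁ _ h => ?_⟩
  have h' := h.comp_affine (N := 2 * m + 1) (s := 2) (o := 0) (by norm_num) (by omega)
  simp only [Nat.sub_zero, extendRight_doubled] at h'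
  refine hext (min x (2 * m + 1)) (by omega) (min_le_right _ _) ?_
  refine (orderEquivOn_extendRight fun i hi₁ hi₂ => ?_).antiMonotone_iff.1 h'
  have := (hperm.1 i hi₁ hi₂).2
  omega

theorem Bicrucial.doubled {k l : ℕ} (hk : 3 ≤ k) (hl : 3 ≤ l) (hπ : Bicrucial (2 * m) k l π) :
    Bicrucial (4 * m + 1) k l (doubled m π) := by
  refine ⟨hπ.1.doubled hk hl, fun x hx₁ _ h => ?_⟩
  have h' := h.comp_affine (N := 2 * m + 1) (s := 2) (o := 1) (by norm_num) (by omega)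
  simp only [extendLeft_doubled] at h'
  refine hπ.2 (min x (2 * m + 1)) (by omega) (min_le_right _ _) ?_
  refine (orderEquivOn_extendLeft fun i hi₁ hi₂ => ?_).antiMonotone_iff.1 h'
  have := (hπ.1.1.1 i hi₁ hi₂).2
  omega

end doubled

/-- If a `(k,l)`-bicrucial permutation of even length `n` exists, then a
`(k,l)`-bicrucial permutation of (odd) length `2*n+1` exists. -/
theorem bicrucial_odd_from_even (k l n : ℕ) (hk : 3 ≤ k) (hl : 3 ≤ l)
    (hn : Even n) (h : ∃ π : ℕ → ℕ, Bicrucial n k l π) :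
    ∃ σ : ℕ → ℕ, Bicrucial (2 * n + 1) k l σ := by
  obtain ⟨π, hπ⟩ := h
  obtain ⟨m, rfl⟩ := hn
  rw [← two_mul] at hπ
  rw [show 2 * (m + m) + 1 = 4 * m + 1 by ring]
  exact ⟨doubled m π, hπ.doubled hk hl⟩
end

section
/- Let k, ℓ ≥ 3 and a, b ≥ 1 be integers, and set P = {a, 2a, …, (k−1)a} and Q = {b, 2b, …, (ℓ−1)b}. If P ∩ Q = ∅, then max((k−1)a, (ℓ−1)b) ≥ max(k,ℓ)·(min(k,ℓ)−1). More precisely: if (k−1)a < (ℓ−1)b then b ≥ k, and if (ℓ−1)b < (k−1)a then a ≥ ℓ. -/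
/-! If `b ≤ k - 1` and `a ≤ l - 1`, then `b * a = a * b` lies in both progressions; so disjointness
forces `k ≤ b` or `l ≤ a`, and every claim follows from this dichotomy by monotonicity of
multiplication. -/

theorem le_or_le_of_progressions_inter_eq_empty {k l a b : ℕ} (ha : 1 ≤ a) (hb : 1 ≤ b)
    (hdisj : {x | ∃ j, 1 ≤ j ∧ j ≤ k - 1 ∧ x = j * a} ∩
             {x | ∃ j, 1 ≤ j ∧ j ≤ l - 1 ∧ x = j * b} = (∅ : Set ℕ)) :
    k ≤ b ∨ l ≤ a := by
  by_contra! h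
  have hmem : b * a ∈ (∅ : Set ℕ) :=
    hdisj ▸ ⟨⟨b, hb, by omega, rfl⟩, ⟨a, ha, by omega, Nat.mul_comm b a⟩⟩
  exact hmem

theorem le_of_sub_one_mul_lt_of_le_or_le {k l a b : ℕ} (h : k ≤ b ∨ l ≤ a)
    (hlt : (k - 1) * a < (l - 1) * b) : k ≤ b := by
  by_contra! hbk
  have hla := h.resolve_left hbk.not_ge
  have : (l - 1) * b ≤ (k - 1) * a :=
    calc (l - 1) * b ≤ (l - 1) * (k - 1) := Nat.mul_le_mul_left _ (by omega)
      _ = (k - 1) * (l - 1) := Nat.mul_comm _ _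
      _ ≤ (k - 1) * a := Nat.mul_le_mul_left _ (by omega)
  omega

theorem max_mul_min_sub_one_le_sub_one_mul (k l : ℕ) : max k l * (min k l - 1) ≤ (l - 1) * k := by
  rcases le_total k l with hkl | hlk
  · rw [max_eq_right hkl, min_eq_left hkl]
    obtain _ | k := k
    · simp
    obtain _ | l := l
    · omega
    simp only [Nat.add_sub_cancel]
    nlinarith
  · rw [max_eq_left hlk, min_eq_right hlk, Nat.mul_comm]

theorem max_mul_min_sub_one_le_of_le_or_le {k l a b : ℕ} (h : k ≤ b ∨ l ≤ a) :
    max k l * (min k l - 1) ≤ max ((k - 1) * a) ((l - 1) * b) := by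
  rcases h with hkb | hla
  · calc max k l * (min k l - 1) ≤ (l - 1) * k := max_mul_min_sub_one_le_sub_one_mul k l
      _ ≤ (l - 1) * b := Nat.mul_le_mul_left _ hkb
      _ ≤ _ := le_max_right _ _
  · calc max k l * (min k l - 1) = max l k * (min l k - 1) := by rw [max_comm, min_comm]
      _ ≤ (k - 1) * l := max_mul_min_sub_one_le_sub_one_mul l k
      _ ≤ (k - 1) * a := Nat.mul_le_mul_left _ hla
      _ ≤ _ := le_max_left _ _

theorem disjoint_progressions_bound_general (k l a b : ℕ)
    (ha : 1 ≤ a) (hb : 1 ≤ b)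
    (hdisj : {x | ∃ j, 1 ≤ j ∧ j ≤ k - 1 ∧ x = j * a} ∩
             {x | ∃ j, 1 ≤ j ∧ j ≤ l - 1 ∧ x = j * b} = (∅ : Set ℕ)) :
    max k l * (min k l - 1) ≤ max ((k - 1) * a) ((l - 1) * b) ∧
    ((k - 1) * a < (l - 1) * b → k ≤ b) ∧
    ((l - 1) * b < (k - 1) * a → l ≤ a) := by
  have h := le_or_le_of_progressions_inter_eq_empty ha hb hdisj
  exact ⟨max_mul_min_sub_one_le_of_le_or_le h, le_of_sub_one_mul_lt_of_le_or_le h,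
    le_of_sub_one_mul_lt_of_le_or_le h.symm⟩

/-- If `P = {a, 2a, …, (k-1)a}` and `Q = {b, 2b, …, (l-1)b}` are disjoint, then
`max((k-1)a, (l-1)b) ≥ max k l * (min k l - 1)`; more precisely, if
`(k-1)a < (l-1)b` then `b ≥ k`, and if `(l-1)b < (k-1)a` then `a ≥ l`. -/
theorem disjoint_progressions_bound (k l a b : ℕ) (hk : 3 ≤ k) (hl : 3 ≤ l)
    (ha : 1 ≤ a) (hb : 1 ≤ b)
    (hdisj : {x | ∃ j, 1 ≤ j ∧ j ≤ k - 1 ∧ x = j * a} ∩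
             {x | ∃ j, 1 ≤ j ∧ j ≤ l - 1 ∧ x = j * b} = (∅ : Set ℕ)) :
    max k l * (min k l - 1) ≤ max ((k - 1) * a) ((l - 1) * b) ∧
    ((k - 1) * a < (l - 1) * b → k ≤ b) ∧
    ((l - 1) * b < (k - 1) * a → l ≤ a) :=
  disjoint_progressions_bound_general k l a b ha hb hdisj
end
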